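/- Every element of the semigroup Σ (the quotient of the free semigroup on S ∪ Γ by the congruence generated by (γ₁,γ₂) ~ γ₁, (x,γ,y) ~ xγy, (x,y) ~ xγ₀y) is represented by a unique irreducible word, and every irreducible word has exactly one of the five forms γxγ', γx, xγ, γ, or x, where x ∈ S and γ,γ' ∈ Γ. -/
import Mathlib


open FreeSemigroup

section GammaSemigroup

variable {S Γ : Type}

/-- One-step rewriting on words over S ⊕ Γ. -/
inductive GStep (m : S → Γ → S → S) (γ₀ : Γ) : List (S ⊕ Γ) → List (S ⊕ Γ) → Prop
  | gg (u v : List (S ⊕ Γ)) (γ₁ γ₂ : Γ) :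
      GStep m γ₀ (u ++ Sum.inr γ₁ :: Sum.inr γ₂ :: v) (u ++ Sum.inr γ₁ :: v)
  | xgy (u v : List (S ⊕ Γ)) (x : S) (γ : Γ) (y : S) :
      GStep m γ₀ (u ++ Sum.inl x :: Sum.inr γ :: Sum.inl y :: v) (u ++ Sum.inl (m x γ y) :: v)
  | xy (u v : List (S ⊕ Γ)) (x y : S) :
      GStep m γ₀ (u ++ Sum.inl x :: Sum.inl y :: v) (u ++ Sum.inl (m x γ₀ y) :: v)

/-- The defining relations on the free semigroup on S ⊕ Γ. -/
def GRel (m : S → Γ → S → S) (γ₀ : Γ) :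
    FreeSemigroup (S ⊕ Γ) → FreeSemigroup (S ⊕ Γ) → Prop :=
  fun a b =>
    (∃ γ₁ γ₂ : Γ, a = of (Sum.inr γ₁) * of (Sum.inr γ₂) ∧ b = of (Sum.inr γ₁)) ∨
    (∃ (x y : S) (γ : Γ), a = of (Sum.inl x) * of (Sum.inr γ) * of (Sum.inl y) ∧
      b = of (Sum.inl (m x γ y))) ∨
    (∃ x y : S, a = of (Sum.inl x) * of (Sum.inl y) ∧ b = of (Sum.inl (m x γ₀ y)))

/-- The congruence generated by the defining relations. -/
def GCon (m : S → Γ → S → S) (γ₀ : Γ) : Con (FreeSemigroup (S ⊕ Γ)) := conGen (GRel m γ₀)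

/-- The universal semigroup Σ of the Γ-semigroup S. -/
abbrev USem (m : S → Γ → S → S) (γ₀ : Γ) := (GCon m γ₀).Quotient

/-- The canonical map μ : S → Σ. -/
def gmu (m : S → Γ → S → S) (γ₀ : Γ) (x : S) : USem m γ₀ :=
  ((of (Sum.inl x) : FreeSemigroup (S ⊕ Γ)) : (GCon m γ₀).Quotient)

/-- The canonical map Γ → Σ. -/
def giota (m : S → Γ → S → S) (γ₀ : Γ) (γ : Γ) : USem m γ₀ :=
  ((of (Sum.inr γ) : FreeSemigroup (S ⊕ Γ)) : (GCon m γ₀).Quotient)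

/-- Principal left ideal of an element of a semigroup. -/
def pLeft {T : Type} [Semigroup T] (a : T) : Set T := {w | ∃ t : T, w = t * a} ∪ {a}

/-- Principal right ideal of an element of a semigroup. -/
def pRight {T : Type} [Semigroup T] (a : T) : Set T := {w | ∃ t : T, w = a * t} ∪ {a}

/-- Principal left ideal in the Γ-semigroup: SΓx ∪ {x}. -/
def pLeftG (m : S → Γ → S → S) (x : S) : Set S := {y | ∃ (s : S) (γ : Γ), y = m s γ x} ∪ {x}

/-- Principal right ideal in the Γ-semigroup: xΓS ∪ {x}. -/
def pRightG (m : S → Γ → S → S) (x : S) : Set S := {y | ∃ (γ : Γ) (s : S), y = m x γ s} ∪ {x}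

/-- Green's H relation on the Γ-semigroup. -/
def HrelG (m : S → Γ → S → S) (a b : S) : Prop := pLeftG m a = pLeftG m b ∧ pRightG m a = pRightG m b

/-- S_δ is a simple semigroup: its only two-sided ideal is S itself. -/
def SimpleAt (m : S → Γ → S → S) (δ : Γ) : Prop :=
  ∀ J : Set S, J.Nonempty → (∀ t : S, ∀ j ∈ J, m t δ j ∈ J ∧ m j δ t ∈ J) → J = Set.univ

/-- e is an idempotent of S_δ. -/
def IdemAt (m : S → Γ → S → S) (δ : Γ) (e : S) : Prop := m e δ e = e

/-- e is a primitive idempotent of S_δ. -/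
def PrimAt (m : S → Γ → S → S) (δ : Γ) (e : S) : Prop :=
  IdemAt m δ e ∧ ∀ f, IdemAt m δ f → m e δ f = f → m f δ e = f → f = e

/-- S_δ is completely simple. -/
def CSimpleAt (m : S → Γ → S → S) (δ : Γ) : Prop := SimpleAt m δ ∧ ∃ e, PrimAt m δ e

/-- S_δ has no zero element. -/
def NoZeroAt (m : S → Γ → S → S) (δ : Γ) : Prop := ¬ ∃ z : S, ∀ t : S, m z δ t = z ∧ m t δ z = z

/-- L is a left ideal of S_δ. -/
def LIdealAt (m : S → Γ → S → S) (δ : Γ) (L : Set S) : Prop :=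
  L.Nonempty ∧ ∀ t : S, ∀ l ∈ L, m t δ l ∈ L

/-- L is a minimal left ideal of S_δ. -/
def MinLIdealAt (m : S → Γ → S → S) (δ : Γ) (L : Set S) : Prop :=
  LIdealAt m δ L ∧ ∀ L' ⊆ L, LIdealAt m δ L' → L' = L

/-- S_δ is a group. -/
def GroupAt (m : S → Γ → S → S) (δ : Γ) : Prop :=
  ∃ e : S, (∀ a, m e δ a = a ∧ m a δ e = a) ∧ ∀ a, ∃ b, m a δ b = e ∧ m b δ a = e

/-- G is a subgroup (a sub-semigroup that is a group) of the semigroup T. -/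
def IsSubgroupOf {T : Type} [Semigroup T] (G : Set T) : Prop :=
  (∀ a ∈ G, ∀ b ∈ G, a * b ∈ G) ∧
  ∃ e ∈ G, (∀ g ∈ G, e * g = g ∧ g * e = g) ∧ ∀ g ∈ G, ∃ h ∈ G, g * h = e ∧ h * g = e

/-- The set Σ' = Σ \ Γ. -/
def USem' (m : S → Γ → S → S) (γ₀ : Γ) : Set (USem m γ₀) := {w | ¬ ∃ γ : Γ, w = giota m γ₀ γ}

end GammaSemigroup

namespace GNF

variable {S Γ : Type}

/-- Values of irreducible words. -/
abbrev T (S Γ : Type) := Γ ⊕ (Option Γ × S × Option Γ)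

def iT : S ⊕ Γ → T S Γ
  | .inl x => .inr (none, x, none)
  | .inr γ => .inl γ

def opT (m : S → Γ → S → S) (γ₀ : Γ) : T S Γ → T S Γ → T S Γ
  | .inl γ, .inl _ => .inl γ
  | .inl γ, .inr (_, x, b) => .inr (some γ, x, b)
  | .inr (a, x, b), .inl γ => .inr (a, x, some (b.getD γ))
  | .inr (a, x, b), .inr (c, y, d) => .inr (a, m x ((b.or c).getD γ₀) y, d)

def F (m : S → Γ → S → S) (γ₀ : Γ) : Option (T S Γ) → (S ⊕ Γ) → Option (T S Γ)
  | none, b => some (iT b)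
  | some t, b => some (opT m γ₀ t (iT b))

def eval (m : S → Γ → S → S) (γ₀ : Γ) (w : List (S ⊕ Γ)) : Option (T S Γ) :=
  w.foldl (F m γ₀) none

variable {m : S → Γ → S → S} {γ₀ : Γ}

lemma F_gg (o : Option (T S Γ)) (γ₁ γ₂ : Γ) :
    F m γ₀ (F m γ₀ o (.inr γ₁)) (.inr γ₂) = F m γ₀ o (.inr γ₁) := by
  rcases o with _ | (δ | ⟨a, z, b⟩) <;> simp [F, iT, opT]

lemma F_xgy (assoc : ∀ (a b c : S) (α β : Γ), m (m a α b) β c = m a α (m b β c))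
    (o : Option (T S Γ)) (x : S) (γ : Γ) (y : S) :
    F m γ₀ (F m γ₀ (F m γ₀ o (.inl x)) (.inr γ)) (.inl y) = F m γ₀ o (.inl (m x γ y)) := by
  rcases o with _ | (δ | ⟨a, z, b⟩) <;> simp [F, iT, opT, assoc, Option.or]

lemma F_xy (assoc : ∀ (a b c : S) (α β : Γ), m (m a α b) β c = m a α (m b β c))
    (o : Option (T S Γ)) (x y : S) :
    F m γ₀ (F m γ₀ o (.inl x)) (.inl y) = F m γ₀ o (.inl (m x γ₀ y)) := by
  rcases o with _ | (δ | ⟨a, z, b⟩) <;> simp [F, iT, opT, assoc, Option.or]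

lemma eval_step (assoc : ∀ (a b c : S) (α β : Γ), m (m a α b) β c = m a α (m b β c))
    {w u : List (S ⊕ Γ)} (h : GStep m γ₀ w u) : eval m γ₀ w = eval m γ₀ u := by
  cases h with
  | gg u v γ₁ γ₂ =>
      simp only [eval, List.foldl_append, List.foldl_cons]
      rw [F_gg]
  | xgy u v x γ y =>
      simp only [eval, List.foldl_append, List.foldl_cons]
      rw [F_xgy assoc]
  | xy u v x y =>
      simp only [eval, List.foldl_append, List.foldl_cons]
      rw [F_xy assoc]

lemma eval_eqv (assoc : ∀ (a b c : S) (α β : Γ), m (m a α b) β c = m a α (m b β c))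
    {w u : List (S ⊕ Γ)} (h : Relation.EqvGen (GStep m γ₀) w u) :
    eval m γ₀ w = eval m γ₀ u := by
  induction h with
  | rel a b h => exact eval_step assoc h
  | refl a => rfl
  | symm a b h ih => exact ih.symm
  | trans a b c h h' ih ih' => exact ih.trans ih'

lemma step_len {w u : List (S ⊕ Γ)} (h : GStep m γ₀ w u) :
    u.length < w.length ∧ u ≠ [] ∧ w ≠ [] := by
  cases h <;> simp +arith [List.length_append]

lemma eqv_ne {w u : List (S ⊕ Γ)} (h : Relation.EqvGen (GStep m γ₀) w u) :
    w ≠ [] ↔ u ≠ [] := by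
  induction h with
  | rel a b h =>
      obtain ⟨-, h1, h2⟩ := step_len h
      simp [h1, h2]
  | refl a => rfl
  | symm a b h ih => exact ih.symm
  | trans a b c h h' ih ih' => exact ih.trans ih'

/-- Classification of irreducible nonempty words. -/
lemma classify (w : List (S ⊕ Γ)) (hne : w ≠ []) (hirr : ∀ u, ¬ GStep m γ₀ w u) :
    (∃ (γ : Γ) (x : S) (γ' : Γ), w = [Sum.inr γ, Sum.inl x, Sum.inr γ']) ∨
    (∃ (γ : Γ) (x : S), w = [Sum.inr γ, Sum.inl x]) ∨
    (∃ (x : S) (γ : Γ), w = [Sum.inl x, Sum.inr γ]) ∨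
    (∃ γ : Γ, w = [Sum.inr γ]) ∨ (∃ x : S, w = [Sum.inl x]) := by
  match w with
  | [] => exact absurd rfl hne
  | [a] =>
      rcases a with x | γ
      · exact Or.inr (Or.inr (Or.inr (Or.inr ⟨x, rfl⟩)))
      · exact Or.inr (Or.inr (Or.inr (Or.inl ⟨γ, rfl⟩)))
  | [a, b] =>
      rcases a with x | γ <;> rcases b with y | γ'
      · exact absurd (GStep.xy (m := m) (γ₀ := γ₀) [] [] x y) (hirr _)
      · exact Or.inr (Or.inr (Or.inl ⟨x, γ', rfl⟩))
      · exact Or.inr (Or.inl ⟨γ, y, rfl⟩)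
      · exact absurd (GStep.gg (m := m) (γ₀ := γ₀) [] [] γ γ') (hirr _)
  | [a, b, c] =>
      rcases a with x | γ <;> rcases b with y | δ <;> rcases c with z | ε
      · exact absurd (GStep.xy (m := m) (γ₀ := γ₀) [] [Sum.inl z] x y) (hirr _)
      · exact absurd (GStep.xy (m := m) (γ₀ := γ₀) [] [Sum.inr ε] x y) (hirr _)
      · exact absurd (GStep.xgy (m := m) (γ₀ := γ₀) [] [] x δ z) (hirr _)
      · exact absurd (GStep.gg (m := m) (γ₀ := γ₀) [Sum.inl x] [] δ ε) (hirr _)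
      · exact absurd (GStep.xy (m := m) (γ₀ := γ₀) [Sum.inr γ] [] y z) (hirr _)
      · exact Or.inl ⟨γ, y, ε, rfl⟩
      · exact absurd (GStep.gg (m := m) (γ₀ := γ₀) [] [Sum.inl z] γ δ) (hirr _)
      · exact absurd (GStep.gg (m := m) (γ₀ := γ₀) [] [Sum.inr ε] γ δ) (hirr _)
  | a :: b :: c :: d :: rest =>
      exfalso
      rcases a with x | γ <;> rcases b with y | δ
      · exact (hirr _) (GStep.xy (m := m) (γ₀ := γ₀) [] (c :: d :: rest) x y)
      · rcases c with z | ε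
        · exact (hirr _) (GStep.xgy (m := m) (γ₀ := γ₀) [] (d :: rest) x δ z)
        · exact (hirr _) (GStep.gg (m := m) (γ₀ := γ₀) [Sum.inl x] (d :: rest) δ ε)
      · rcases c with z | ε
        · exact (hirr _) (GStep.xy (m := m) (γ₀ := γ₀) [Sum.inr γ] (d :: rest) y z)
        · rcases d with u' | ζ
          · exact (hirr _) (GStep.xgy (m := m) (γ₀ := γ₀) [Sum.inr γ] rest y ε u')
          · exact (hirr _) (GStep.gg (m := m) (γ₀ := γ₀) [Sum.inr γ, Sum.inl y] rest ε ζ)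
      · exact (hirr _) (GStep.gg (m := m) (γ₀ := γ₀) [] (c :: d :: rest) γ δ)

def decode : T S Γ → List (S ⊕ Γ)
  | .inl γ => [Sum.inr γ]
  | .inr (a, x, b) =>
      (a.elim [] fun γ => [Sum.inr γ]) ++ Sum.inl x :: (b.elim [] fun γ => [Sum.inr γ])

lemma decode_eval (w : List (S ⊕ Γ)) (hne : w ≠ []) (hirr : ∀ u, ¬ GStep m γ₀ w u) :
    (eval m γ₀ w).elim [] decode = w := by
  rcases classify w hne hirr with ⟨γ, x, γ', rfl⟩ | ⟨γ, x, rfl⟩ | ⟨x, γ, rfl⟩ | ⟨γ, rfl⟩ |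
    ⟨x, rfl⟩ <;> simp [eval, F, iT, opT, decode]

/-- Existence of a normal form. -/
lemma exists_nf (w : List (S ⊕ Γ)) (hne : w ≠ []) :
    ∃ w', Relation.EqvGen (GStep m γ₀) w w' ∧ ∀ u, ¬ GStep m γ₀ w' u := by
  by_cases h : ∀ u, ¬ GStep m γ₀ w u
  · exact ⟨w, Relation.EqvGen.refl w, h⟩
  · push_neg at h
    obtain ⟨u, hu⟩ := h
    obtain ⟨hl, hne', -⟩ := step_len hu
    obtain ⟨w', h1, h2⟩ := exists_nf u hne'
    exact ⟨w', Relation.EqvGen.trans _ _ _ (Relation.EqvGen.rel _ _ hu) h1, h2⟩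
termination_by w.length
decreasing_by exact hl

end GNF

theorem stmt (S Γ : Type) [Nonempty S] [Nonempty Γ] (m : S → Γ → S → S)
    (assoc : ∀ (a b c : S) (α β : Γ), m (m a α b) β c = m a α (m b β c)) (γ₀ : Γ) :
    (∀ w : List (S ⊕ Γ), w ≠ [] →
      ∃! w' : List (S ⊕ Γ), Relation.EqvGen (GStep m γ₀) w w' ∧ ∀ u, ¬ GStep m γ₀ w' u) ∧
    (∀ w : List (S ⊕ Γ), w ≠ [] → (∀ u, ¬ GStep m γ₀ w u) →
      (∃ (γ : Γ) (x : S) (γ' : Γ), w = [Sum.inr γ, Sum.inl x, Sum.inr γ']) ∨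
      (∃ (γ : Γ) (x : S), w = [Sum.inr γ, Sum.inl x]) ∨
      (∃ (x : S) (γ : Γ), w = [Sum.inl x, Sum.inr γ]) ∨
      (∃ γ : Γ, w = [Sum.inr γ]) ∨ (∃ x : S, w = [Sum.inl x])) := by
  constructor
  · intro w hne
    obtain ⟨w', h1, h2⟩ := GNF.exists_nf (m := m) (γ₀ := γ₀) w hne
    refine ⟨w', ⟨h1, h2⟩, ?_⟩
    rintro y ⟨hy1, hy2⟩
    have hyne : y ≠ [] := (GNF.eqv_ne hy1).mp hne
    have hw'ne : w' ≠ [] := (GNF.eqv_ne h1).mp hne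
    have he : GNF.eval m γ₀ y = GNF.eval m γ₀ w' :=
      (GNF.eval_eqv assoc hy1).symm.trans (GNF.eval_eqv assoc h1)
    rw [← GNF.decode_eval y hyne hy2, ← GNF.decode_eval w' hw'ne h2, he]
  · intro w hne hirr
    exact GNF.classify w hne hirr
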